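/- Let f : ℝⁿ → ℝᵐ be twice continuously differentiable, let y ∈ ℝᵐ, and let θ* be a critical point of E. Suppose there exists a vector v ∈ ℝⁿ with D²E(θ*)(v, v) − ‖Df(θ*)v‖² < 0 (i.e. the matrix S = ∇²E(θ*) − J(θ*)ᵀJ(θ*) is not positive semidefinite). Then there exists α₀ ≥ 0 such that for every α > α₀ the Hessian quadratic form of E_α at θ* is negative in the direction v, i.e. D²E_α(θ*)(v, v) < 0, and consequently θ* is not a local minimum point of E_α for any α > α₀. -/

import Mathlib

/-!
At `θ*` the residual of the expanded problem is `(1 + α)(y − f θ*)`, so the Hessians satisfy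
`D²E_α(v, v) = ‖Df v‖² − (1 + α)⟪y − f θ*, D²f(v, v)⟫ = ‖Df v‖² + (1 + α)(D²E(v, v) − ‖Df v‖²)`,
which is negative once `α` is large. On the line `t ↦ θ* + t v` a negative second derivative
makes `θ*` a local maximum by the second-derivative test; were it also a local minimum, the
function would be locally constant there and its second derivative would vanish.
-/

/-- The least-squares objective `E(θ) = ½‖y − f(θ)‖²`. -/
noncomputable def lsE {n m : ℕ} (f : EuclideanSpace ℝ (Fin n) → EuclideanSpace ℝ (Fin m))
    (y : EuclideanSpace ℝ (Fin m)) (θ : EuclideanSpace ℝ (Fin n)) : ℝ :=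
  (1 / 2) * ‖y - f θ‖ ^ 2

/-- The `α`-expanded objective at the point `θs`:
`E_α(θ) = ½‖ŷ − f(θ)‖²` with `ŷ = y + α • (y − f(θs))`. -/
noncomputable def lsEexp {n m : ℕ} (f : EuclideanSpace ℝ (Fin n) → EuclideanSpace ℝ (Fin m))
    (y : EuclideanSpace ℝ (Fin m)) (θs : EuclideanSpace ℝ (Fin n)) (α : ℝ)
    (θ : EuclideanSpace ℝ (Fin n)) : ℝ :=
  (1 / 2) * ‖(y + α • (y - f θs)) - f θ‖ ^ 2

open Filter Topology
open scoped RealInnerProductSpace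

theorem IsLocalMin.deriv_deriv_nonneg {φ : ℝ → ℝ} {x₀ : ℝ} (h : IsLocalMin φ x₀)
    (hc : ContinuousAt φ x₀) : 0 ≤ deriv (deriv φ) x₀ := by
  by_contra! hneg
  have hmax : IsLocalMax φ x₀ := isLocalMax_of_deriv_deriv_neg hneg h.deriv_eq_zero hc
  have hconst : φ =ᶠ[𝓝 x₀] fun _ ↦ φ x₀ := by
    filter_upwards [h, hmax] with x hge hle using le_antisymm hle hge
  have hzero : deriv (deriv φ) x₀ = 0 := by
    rw [hconst.deriv.deriv_eq]
    simp
  exact hneg.ne hzero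

section

variable {E F : Type*} [NormedAddCommGroup E] [NormedSpace ℝ E]
  [NormedAddCommGroup F] [InnerProductSpace ℝ F]

theorem IsLocalMin.fderiv_fderiv_apply_self_nonneg {g : E → ℝ} {a : E} (h : IsLocalMin g a)
    (hg : ∀ᶠ x in 𝓝 a, DifferentiableAt ℝ g x) (hg' : DifferentiableAt ℝ (fderiv ℝ g) a)
    (v : E) : 0 ≤ fderiv ℝ (fderiv ℝ g) a v v := by
  set L : ℝ → E := fun t ↦ a + t • v
  have hL : ∀ t, HasDerivAt L v t := fun t ↦ by
    unfold L
    simpa using ((hasDerivAt_id t).smul_const v).const_add a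
  have hL0 : L 0 = a := by simp [L]
  have hLt : Tendsto L (𝓝 0) (𝓝 a) := hL0 ▸ (hL 0).continuousAt.tendsto
  have hderiv : deriv (g ∘ L) =ᶠ[𝓝 0] fun t ↦ fderiv ℝ g (L t) v := by
    filter_upwards [hLt.eventually hg] with t ht
    exact (ht.hasFDerivAt.comp_hasDerivAt t (hL t)).deriv
  have hsecond : deriv (deriv (g ∘ L)) 0 = fderiv ℝ (fderiv ℝ g) a v v := by
    have happly := (ContinuousLinearMap.apply ℝ ℝ v).hasFDerivAt.comp a hg'.hasFDerivAt
    rw [← hL0] at happly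
    rw [hderiv.deriv_eq]
    exact (happly.comp_hasDerivAt 0 (hL 0)).deriv.trans (by simp [hL0])
  rw [← hsecond]
  refine IsLocalMin.deriv_deriv_nonneg ?_ ?_
  · exact (hL0 ▸ h).comp_continuous (hL 0).continuousAt
  · exact (hL0 ▸ hg.self_of_nhds.continuousAt).comp (hL 0).continuousAt

theorem HasFDerivAt.half_norm_sub_sq {f : E → F} {f' : E →L[ℝ] F} {θ : E} (z : F)
    (hf : HasFDerivAt f f' θ) :
    HasFDerivAt (fun x ↦ (1 / 2 : ℝ) * ‖z - f x‖ ^ 2) ((innerSL ℝ (f θ - z)).comp f') θ := by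
  refine ((hf.const_sub z).norm_sq.const_mul (1 / 2)).congr_fderiv ?_
  ext w
  simp

theorem fderiv_fderiv_half_norm_sub_sq_apply {f : E → F} {θ : E} (z : F)
    (hf : ContDiffAt ℝ 2 f θ) (v : E) :
    fderiv ℝ (fderiv ℝ (fun x ↦ (1 / 2 : ℝ) * ‖z - f x‖ ^ 2)) θ v v =
      ‖fderiv ℝ f θ v‖ ^ 2 - ⟪z - f θ, fderiv ℝ (fderiv ℝ f) θ v v⟫ := by
  have hdiff : ∀ᶠ x in 𝓝 θ, DifferentiableAt ℝ f x :=
    (hf.eventually (by simp)).mono fun x hx ↦ hx.differentiableAt (by norm_num)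
  have hf' : DifferentiableAt ℝ (fderiv ℝ f) θ :=
    (hf.fderiv_right (m := 1) le_rfl).differentiableAt one_ne_zero
  have hfderiv : fderiv ℝ (fun x ↦ (1 / 2 : ℝ) * ‖z - f x‖ ^ 2) =ᶠ[𝓝 θ]
      fun x ↦ (innerSL ℝ (f x - z)).comp (fderiv ℝ f x) :=
    hdiff.mono fun x hx ↦ (hx.hasFDerivAt.half_norm_sub_sq z).fderiv
  have hinner : HasFDerivAt (fun x ↦ innerSL ℝ (f x - z)) ((innerSL ℝ).comp (fderiv ℝ f θ)) θ :=
    (innerSL ℝ).hasFDerivAt.comp θ (hdiff.self_of_nhds.hasFDerivAt.sub_const z)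
  rw [hfderiv.fderiv_eq, (hinner.clm_comp hf'.hasFDerivAt).fderiv]
  simp only [map_sub, ContinuousLinearMap.sub_comp, add_apply,
    sub_apply, ContinuousLinearMap.comp_apply, ContinuousLinearMap.compL_apply,
    ContinuousLinearMap.flip_apply, coe_innerSL_apply, inner_self_eq_norm_sq_to_K,
    Real.ringHom_apply, inner_sub_left]
  ring

end

section

variable {n m : ℕ} {f : EuclideanSpace ℝ (Fin n) → EuclideanSpace ℝ (Fin m)}
  {y : EuclideanSpace ℝ (Fin m)} {θs : EuclideanSpace ℝ (Fin n)}

theorem fderiv_fderiv_lsEexp_apply (hf : ContDiffAt ℝ 2 f θs) (α : ℝ)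
    (v : EuclideanSpace ℝ (Fin n)) :
    fderiv ℝ (fderiv ℝ (lsEexp f y θs α)) θs v v =
      (1 + α) * fderiv ℝ (fderiv ℝ (lsE f y)) θs v v - α * ‖fderiv ℝ f θs v‖ ^ 2 := by
  have hresidual : y + α • (y - f θs) - f θs = (1 + α) • (y - f θs) := by module
  unfold lsEexp lsE
  rw [fderiv_fderiv_half_norm_sub_sq_apply _ hf,
    fderiv_fderiv_half_norm_sub_sq_apply _ hf, hresidual, real_inner_smul_left]
  ring

theorem contDiff_lsEexp (hf : ContDiff ℝ 2 f) (α : ℝ) : ContDiff ℝ 2 (lsEexp f y θs α) :=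
  contDiff_const.mul ((contDiff_const.sub hf).norm_sq ℝ)

end

theorem stmt_3_general {n m : ℕ} (f : EuclideanSpace ℝ (Fin n) → EuclideanSpace ℝ (Fin m))
    (y : EuclideanSpace ℝ (Fin m)) (θs : EuclideanSpace ℝ (Fin n))
    (hf : ContDiff ℝ 2 f)
    (v : EuclideanSpace ℝ (Fin n))
    (hv : fderiv ℝ (fderiv ℝ (lsE f y)) θs v v - ‖fderiv ℝ f θs v‖ ^ 2 < 0) :
    ∃ α₀ : ℝ, 0 ≤ α₀ ∧ ∀ α : ℝ, α₀ < α →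
      fderiv ℝ (fderiv ℝ (lsEexp f y θs α)) θs v v < 0 ∧
      ¬ IsLocalMin (lsEexp f y θs α) θs := by
  set J := ‖fderiv ℝ f θs v‖ ^ 2
  set q := fderiv ℝ (fderiv ℝ (lsE f y)) θs v v - J
  refine ⟨max 0 (J / -q - 1), le_max_left _ _, fun α hα ↦ ?_⟩
  have hJ : J < (1 + α) * -q :=
    (div_lt_iff₀ (neg_pos.mpr hv)).mp (by linarith [le_max_right 0 (J / -q - 1)])
  have hneg : fderiv ℝ (fderiv ℝ (lsEexp f y θs α)) θs v v < 0 := by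
    rw [fderiv_fderiv_lsEexp_apply hf.contDiffAt]
    linarith
  refine ⟨hneg, fun hmin ↦ hneg.not_ge ?_⟩
  have hg : ContDiff ℝ 2 (lsEexp f y θs α) := contDiff_lsEexp hf α
  exact hmin.fderiv_fderiv_apply_self_nonneg
    (Eventually.of_forall fun x ↦ (hg.differentiable two_ne_zero).differentiableAt)
    ((hg.fderiv_right (m := 1) le_rfl).differentiable one_ne_zero).differentiableAt v

theorem stmt_3 {n m : ℕ} (f : EuclideanSpace ℝ (Fin n) → EuclideanSpace ℝ (Fin m))
    (y : EuclideanSpace ℝ (Fin m)) (θs : EuclideanSpace ℝ (Fin n))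
    (hf : ContDiff ℝ 2 f)
    (hcrit : fderiv ℝ (lsE f y) θs = 0)
    (v : EuclideanSpace ℝ (Fin n))
    (hv : fderiv ℝ (fderiv ℝ (lsE f y)) θs v v - ‖fderiv ℝ f θs v‖ ^ 2 < 0) :
    ∃ α₀ : ℝ, 0 ≤ α₀ ∧ ∀ α : ℝ, α₀ < α →
      fderiv ℝ (fderiv ℝ (lsEexp f y θs α)) θs v v < 0 ∧
      ¬ IsLocalMin (lsEexp f y θs α) θs :=
  stmt_3_general f y θs hf v hv
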